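/- arXiv:2011.05875 — 8 statements merged into one kernel-verified Lean document; each statement's English description precedes it below -/
import Mathlib

section
/- Let ((Aₙ),(Ψₙ)) be a factorable weak operator-valued frame in B(H,H₀) with frame operator S_{A,Ψ}, and let Ãₙ := Aₙ S_{A,Ψ}⁻¹ and Ψ̃ₙ := Ψₙ (S_{A,Ψ}⁻¹)* denote its canonical dual. Suppose (yₙ) and (zₙ) are square-summable sequences in H₀ and h ∈ H satisfies h = Σ_{n=1}^∞ Aₙ* yₙ = Σ_{n=1}^∞ Ψₙ* zₙ. Then Σ_{n=1}^∞ ⟨yₙ, zₙ⟩ = Σ_{n=1}^∞ ⟨Ψ̃ₙ h, Ãₙ h⟩ + Σ_{n=1}^∞ ⟨yₙ − Ψ̃ₙ h, zₙ − Ãₙ h⟩, all series converging. -/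
/-!
Put `u = (S⁻¹)* h` and `v = S⁻¹ h`, so that `Ψ̃ₙ h = Ψₙ u` and `Ãₙ h = Aₙ v`. Factorability puts
`F = (Ψₙ u)ₙ` and `G = (Aₙ v)ₙ` in `ℓ²(ℕ, H₀)`, alongside `Y = (yₙ)` and `Z = (zₙ)`, and every
series in the statement is an `ℓ²` inner product. Moving the adjoints across,
`⟨F, G⟩ = ⟨u, S v⟩`, `⟨F, Z⟩ = ⟨u, Σ Ψₙ* zₙ⟩` and `⟨Y, G⟩ = ⟨Σ Aₙ* yₙ, v⟩`, all three equal to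
`⟨u, h⟩`. Hence the cross terms `⟨F, Z - G⟩` and `⟨Y - F, G⟩` vanish, and expanding
`⟨Y, Z⟩ = ⟨F + (Y - F), G + (Z - G)⟩` gives the identity.
-/

noncomputable section

open ContinuousLinearMap Filter

variable {H H₀ : Type*} [NormedAddCommGroup H] [InnerProductSpace ℂ H] [CompleteSpace H]
  [NormedAddCommGroup H₀] [InnerProductSpace ℂ H₀] [CompleteSpace H₀]

/-- `ℓ²(I, H₀)`: square-summable `H₀`-valued families indexed by `I`. -/
abbrev l2 (I : Type*) (H₀ : Type*) [NormedAddCommGroup H₀] : Type _ :=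
  lp (fun _ : I => H₀) 2

/-- The isometry `Lᵢ : H₀ → ℓ²(I,H₀)` sending `h` to the family equal to `h` at index `i`
and `0` elsewhere. -/
def Lop {I : Type*} [DecidableEq I] (i : I) : H₀ →L[ℂ] l2 I H₀ :=
  LinearMap.mkContinuous
    { toFun := fun h => lp.single 2 i h
      map_add' := by
        intro a b
        apply lp.ext
        funext j
        by_cases hj : j = i
        · subst hj; simp [lp.single_apply_self]
        · simp [lp.single_apply_ne _ _ _ hj, lp.coeFn_add]
      map_smul' := by
        intro c a
        simp [lp.single_smul] }
    1
    (by
      intro h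
      simpa using (lp.norm_single (p := 2) (by norm_num) (fun _ : I => h) i).le)

/-- Convergence of the sequence of partial sums `∑_{n < m} f n` to `x` as `m → ∞`. -/
def SeqSum {E : Type*} [AddCommMonoid E] [TopologicalSpace E] (f : ℕ → E) (x : E) : Prop :=
  Tendsto (fun m => ∑ n ∈ Finset.range m, f n) atTop (nhds x)

open scoped InnerProductSpace

section Hilbert

variable {𝕜 E : Type*} [RCLike 𝕜] [NormedAddCommGroup E] [InnerProductSpace 𝕜 E]

theorem inner_eq_inner_add_inner_sub_sub {F G Y Z : E} (hFZ : ⟪F, Z⟫_𝕜 = ⟪F, G⟫_𝕜)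
    (hYG : ⟪Y, G⟫_𝕜 = ⟪F, G⟫_𝕜) : ⟪Y, Z⟫_𝕜 = ⟪F, G⟫_𝕜 + ⟪Y - F, Z - G⟫_𝕜 := by
  simp only [inner_sub_left, inner_sub_right, hFZ, hYG]
  ring

theorem memℓp_two_of_summable_sq {y : ℕ → E} (hy : Summable fun n => ‖y n‖ ^ 2) :
    Memℓp y 2 :=
  memℓp_gen (by simpa using hy)

theorem seqSum_inner_of_apply_eq {F G : l2 ℕ E} {f g : ℕ → E} (hF : ∀ n, F n = f n)
    (hG : ∀ n, G n = g n) : SeqSum (fun n => ⟪f n, g n⟫_𝕜) ⟪F, G⟫_𝕜 := by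
  simpa only [SeqSum, hF, hG] using (lp.hasSum_inner F G).tendsto_sum_nat

variable {E' : Type*} [CompleteSpace E] [NormedAddCommGroup E'] [InnerProductSpace 𝕜 E'] [CompleteSpace E']

theorem inner_eq_of_seqSum_adjoint (B : ℕ → E →L[𝕜] E') {u x : E} {F W : l2 ℕ E'}
    {w : ℕ → E'} (hF : ∀ n, F n = B n u) (hW : ∀ n, W n = w n)
    (hw : SeqSum (fun n => adjoint (B n) (w n)) x) :
    ⟪F, W⟫_𝕜 = ⟪u, x⟫_𝕜 := by
  refine tendsto_nhds_unique (seqSum_inner_of_apply_eq (𝕜 := 𝕜) hF hW) ?_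
  simpa only [adjoint_inner_right, inner_sum] using
    (tendsto_const_nhds (x := u)).inner (𝕜 := 𝕜) hw

end Hilbert

theorem apply_eq_of_seqSum_Lop {E : Type*} [NormedAddCommGroup E] [InnerProductSpace ℂ E]
    {g : ℕ → E} {F : l2 ℕ E} (hF : SeqSum (fun n => Lop n (g n)) F) (k : ℕ) : F k = g k := by
  have hk := ((lp.lipschitzWith_one_eval 2 k).continuous.tendsto F).comp hF
  refine tendsto_nhds_unique hk (tendsto_const_nhds.congr' ?_)
  filter_upwards [eventually_gt_atTop k] with m hm
  simp only [Function.comp_def, Lop, LinearMap.mkContinuous_apply, LinearMap.coe_mk, AddHom.coe_mk,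
    lp.coeFn_sum, Finset.sum_apply, lp.coeFn_single]
  simp [Pi.single_apply, hm]

theorem stmt0_general
    (A Ψ : ℕ → H →L[ℂ] H₀) (S T : H →L[ℂ] H)
    (hS : ∀ h : H, SeqSum (fun n => adjoint (Ψ n) (A n h)) (S h))
    (hST : S ∘L T = 1)
    (θA θΨ : H →L[ℂ] l2 ℕ H₀)
    (hθA : ∀ h : H, SeqSum (fun n => Lop n (A n h)) (θA h))
    (hθΨ : ∀ h : H, SeqSum (fun n => Lop n (Ψ n h)) (θΨ h))
    (y z : ℕ → H₀)
    (hy : Summable fun n => ‖y n‖ ^ 2) (hz : Summable fun n => ‖z n‖ ^ 2)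
    (h : H)
    (hhy : SeqSum (fun n => adjoint (A n) (y n)) h)
    (hhz : SeqSum (fun n => adjoint (Ψ n) (z n)) h) :
    ∃ s₂ s₃ : ℂ,
      SeqSum (fun n => (inner ℂ ((Ψ n ∘L adjoint T) h) ((A n ∘L T) h) : ℂ)) s₂ ∧
      SeqSum (fun n => (inner ℂ (y n - (Ψ n ∘L adjoint T) h) (z n - (A n ∘L T) h) : ℂ)) s₃ ∧
      SeqSum (fun n => (inner ℂ (y n) (z n) : ℂ)) (s₂ + s₃) := by
  set u := adjoint T h
  set v := T h
  let Y : l2 ℕ H₀ := ⟨y, memℓp_two_of_summable_sq hy⟩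
  let Z : l2 ℕ H₀ := ⟨z, memℓp_two_of_summable_sq hz⟩
  have hF := apply_eq_of_seqSum_Lop (hθΨ u)
  have hG := apply_eq_of_seqSum_Lop (hθA v)
  have hSv : S v = h := congr($hST h)
  have hFG : ⟪θΨ u, θA v⟫_ℂ = ⟪u, h⟫_ℂ := hSv ▸ inner_eq_of_seqSum_adjoint Ψ hF hG (hS v)
  have hFZ : ⟪θΨ u, Z⟫_ℂ = ⟪u, h⟫_ℂ := inner_eq_of_seqSum_adjoint Ψ hF (fun _ => rfl) hhz
  have hYG : ⟪Y, θA v⟫_ℂ = ⟪u, h⟫_ℂ := by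
    have hGY : ⟪θA v, Y⟫_ℂ = ⟪v, h⟫_ℂ := inner_eq_of_seqSum_adjoint A hG (fun _ => rfl) hhy
    rw [← inner_conj_symm, hGY, inner_conj_symm, adjoint_inner_left]
  refine ⟨_, _, seqSum_inner_of_apply_eq hF hG,
    seqSum_inner_of_apply_eq (F := Y - θΨ u) (G := Z - θA v)
    (fun n => congrArg (y n - ·) (hF n)) (fun n => congrArg (z n - ·) (hG n)), ?_⟩
  rw [← inner_eq_inner_add_inner_sub_sub (hFZ.trans hFG.symm) (hYG.trans hFG.symm)]
  exact seqSum_inner_of_apply_eq (F := Y) (G := Z) (fun _ => rfl) (fun _ => rfl)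

/-- For a factorable weak OVF `((Aₙ),(Ψₙ))` with frame operator `S`
(with inverse `T`), if `h = Σ Aₙ* yₙ = Σ Ψₙ* zₙ` with `(yₙ), (zₙ)` square-summable, then
`Σ ⟨yₙ, zₙ⟩ = Σ ⟨Ψ̃ₙ h, Ãₙ h⟩ + Σ ⟨yₙ − Ψ̃ₙ h, zₙ − Ãₙ h⟩`, all series converging,
where `Ãₙ = Aₙ S⁻¹` and `Ψ̃ₙ = Ψₙ (S⁻¹)*`. -/
theorem stmt0
    (A Ψ : ℕ → H →L[ℂ] H₀) (S T : H →L[ℂ] H)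
    (hS : ∀ h : H, SeqSum (fun n => adjoint (Ψ n) (A n h)) (S h))
    (hST : S ∘L T = 1) (hTS : T ∘L S = 1)
    (θA θΨ : H →L[ℂ] l2 ℕ H₀)
    (hθA : ∀ h : H, SeqSum (fun n => Lop n (A n h)) (θA h))
    (hθΨ : ∀ h : H, SeqSum (fun n => Lop n (Ψ n h)) (θΨ h))
    (y z : ℕ → H₀)
    (hy : Summable fun n => ‖y n‖ ^ 2) (hz : Summable fun n => ‖z n‖ ^ 2)
    (h : H)
    (hhy : SeqSum (fun n => adjoint (A n) (y n)) h)
    (hhz : SeqSum (fun n => adjoint (Ψ n) (z n)) h) :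
    ∃ s₂ s₃ : ℂ,
      SeqSum (fun n => (inner ℂ ((Ψ n ∘L adjoint T) h) ((A n ∘L T) h) : ℂ)) s₂ ∧
      SeqSum (fun n => (inner ℂ (y n - (Ψ n ∘L adjoint T) h) (z n - (A n ∘L T) h) : ℂ)) s₃ ∧
      SeqSum (fun n => (inner ℂ (y n) (z n) : ℂ)) (s₂ + s₃) :=
  stmt0_general A Ψ S T hS hST θA θΨ hθA hθΨ y z hy hz h hhy hhz
end
end

section
/- Let ((Aₙ),(Ψₙ)) be a weak operator-valued frame in B(H,H₀) with frame operator S_{A,Ψ} and frame bounds a, b. Then: (i) the canonical dual pair ((Aₙ S_{A,Ψ}⁻¹),(Ψₙ (S_{A,Ψ}⁻¹)*)) is a weak OVF whose frame operator equals S_{A,Ψ}⁻¹, and the canonical dual of this canonical dual is the original pair ((Aₙ),(Ψₙ)); (ii) 1/b and 1/a are frame bounds for the canonical dual; (iii) if a and b are the optimal frame bounds of ((Aₙ),(Ψₙ)), then 1/b and 1/a are the optimal frame bounds of its canonical dual. -/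
noncomputable section

open ContinuousLinearMap Filter

variable {H H₀ : Type*} [NormedAddCommGroup H] [InnerProductSpace ℂ H] [CompleteSpace H]
  [NormedAddCommGroup H₀] [InnerProductSpace ℂ H₀] [CompleteSpace H₀]

/-- Properties of the canonical dual `((Aₙ S⁻¹), (Ψₙ (S⁻¹)*))` of a weak OVF
`((Aₙ),(Ψₙ))` with frame operator `S` (inverse `T`) and frame bounds `a, b`. -/
theorem stmt1
    (A Ψ : ℕ → H →L[ℂ] H₀) (S T : H →L[ℂ] H)
    (hS : ∀ h : H, SeqSum (fun n => adjoint (Ψ n) (A n h)) (S h))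
    (hST : S ∘L T = 1) (hTS : T ∘L S = 1)
    (a b : ℝ) (ha : 0 < a) (hb : 0 < b)
    (hlow : ∀ h : H, a * ‖h‖ ≤ ‖S h‖) (hup : ∀ h : H, ‖S h‖ ≤ b * ‖h‖) :
    -- (i) the canonical dual is a weak OVF with frame operator `S⁻¹ = T`, and the canonical
    -- dual of the canonical dual is the original pair
    ((∀ h : H, SeqSum (fun n => adjoint (Ψ n ∘L adjoint T) ((A n ∘L T) h)) (T h)) ∧
      IsUnit T ∧
      (∀ n : ℕ, (A n ∘L T) ∘L S = A n ∧ (Ψ n ∘L adjoint T) ∘L adjoint S = Ψ n)) ∧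
    -- (ii) `1/b` and `1/a` are frame bounds for the canonical dual
    (∀ h : H, (1 / b) * ‖h‖ ≤ ‖T h‖ ∧ ‖T h‖ ≤ (1 / a) * ‖h‖) ∧
    -- (iii) optimality passes to the canonical dual
    ((a = ‖T‖⁻¹ ∧ b = ‖S‖) → (1 / b = ‖S‖⁻¹ ∧ 1 / a = ‖T‖)) := by
  have hTSh : ∀ h : H, T (S h) = h := fun h => congrArg (fun f => f h) hTS ▸ rfl
  have hSTh : ∀ h : H, S (T h) = h := fun h => congrArg (fun f => f h) hST ▸ rfl
  refine ⟨⟨?_, ?_, ?_⟩, ?_, ?_⟩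
  · intro h
    have h1 := hS (T h)
    unfold SeqSum at h1 ⊢
    have heq : (fun m => ∑ n ∈ Finset.range m, adjoint (Ψ n ∘L adjoint T) ((A n ∘L T) h))
        = fun m => T (∑ n ∈ Finset.range m, adjoint (Ψ n) (A n (T h))) := by
      funext m
      rw [map_sum]
      exact Finset.sum_congr rfl fun n _ => by simp [adjoint_comp]
    have h2 := (T.continuous.tendsto (S (T h))).comp h1
    rw [hSTh] at h2
    rw [heq]
    exact h2
  · exact ⟨⟨T, S, hTS, hST⟩, rfl⟩
  · intro n
    constructor
    · rw [ContinuousLinearMap.comp_assoc, hTS, ContinuousLinearMap.one_def,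
        ContinuousLinearMap.comp_id]
    · rw [ContinuousLinearMap.comp_assoc, ← adjoint_comp, hST, ContinuousLinearMap.one_def,
        adjoint_id, ContinuousLinearMap.comp_id]
  · intro h
    constructor
    · rw [div_mul_eq_mul_div, div_le_iff₀ hb]
      calc 1 * ‖h‖ = ‖S (T h)‖ := by rw [one_mul, hSTh]
        _ ≤ b * ‖T h‖ := hup _
        _ = ‖T h‖ * b := mul_comm _ _
    · rw [div_mul_eq_mul_div, le_div_iff₀ ha, mul_comm]
      calc a * ‖T h‖ ≤ ‖S (T h)‖ := hlow _
        _ = 1 * ‖h‖ := by rw [one_mul, hSTh]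
  · rintro ⟨haT, hbS⟩
    have hT0 : 0 < ‖T‖ := by
      by_contra hc
      push_neg at hc
      have : ‖T‖ = 0 := le_antisymm hc (norm_nonneg _)
      rw [haT, this] at ha
      simp at ha
    constructor
    · rw [hbS, one_div]
    · rw [haT, one_div, inv_inv]
end
end

section
/- Let ((Aₙ),(Ψₙ)) be a factorable weak operator-valued frame in B(H,H₀). Then: (i) the analysis operator θ_A : h ↦ Σₙ Lₙ Aₙ h is a bounded injective linear operator from H to ℓ²(ℕ,H₀); (ii) the synthesis operator θ_Ψ* : ℓ²(ℕ,H₀) → H, z ↦ Σₙ Ψₙ* Lₙ* z, is a bounded surjective linear operator; (iii) the frame operator factors as S_{A,Ψ} = θ_Ψ* θ_A; (iv) the operator P_{A,Ψ} := θ_A S_{A,Ψ}⁻¹ θ_Ψ* on ℓ²(ℕ,H₀) is an idempotent (P_{A,Ψ}² = P_{A,Ψ}) whose range equals θ_A(H). -/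
noncomputable section

open ContinuousLinearMap Filter

variable {H H₀ : Type*} [NormedAddCommGroup H] [InnerProductSpace ℂ H] [CompleteSpace H]
  [NormedAddCommGroup H₀] [InnerProductSpace ℂ H₀] [CompleteSpace H₀]

/-! Testing the partial sums defining `θ h` against the coordinate maps `Lₙ*` shows that
`(θ_A h)ₙ = Aₙ h`. Since every `z ∈ ℓ²` is the sum of the `Lₙ zₙ`, continuity of `θ_Ψ*` gives
`θ_Ψ* z = Σ Ψₙ* zₙ`, and hence `θ_Ψ* θ_A h = Σ Ψₙ* Aₙ h = S h`. The remaining claims are algebra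
of the factorisation `S = θ_Ψ* θ_A` of the invertible operator `S`. -/

section SeqSum

variable {E F : Type*} [AddCommMonoid E] [TopologicalSpace E] [AddCommMonoid F]
  [TopologicalSpace F]

lemma HasSum.seqSum {f : ℕ → E} {x : E} (hf : HasSum f x) : SeqSum f x :=
  hf.tendsto_sum_nat

lemma SeqSum.unique [T2Space E] {f : ℕ → E} {x y : E} (hx : SeqSum f x) (hy : SeqSum f y) :
    x = y :=
  tendsto_nhds_unique hx hy

lemma SeqSum.map {G : Type*} [FunLike G E F] [AddMonoidHomClass G E F] {f : ℕ → E} {x : E}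
    (hf : SeqSum f x) (g : G) (hg : Continuous g) : SeqSum (fun n => g (f n)) (g x) := by
  simpa only [SeqSum, map_sum, Function.comp_def] using (hg.tendsto x).comp hf

end SeqSum

section Lop

variable {I : Type*} [DecidableEq I]

lemma Lop_apply {E : Type*} [NormedAddCommGroup E] [InnerProductSpace ℂ E] (i : I) (x : E) :
    Lop i x = lp.single 2 i x :=
  rfl

lemma adjoint_Lop_apply (i : I) (z : l2 I H₀) : adjoint (Lop i) z = z i :=
  ext_inner_right ℂ fun x => by rw [adjoint_inner_left, Lop_apply, lp.inner_single_right]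

end Lop

lemma apply_eq_of_seqSum_Lop_s2 {x : ℕ → H₀} {y : l2 ℕ H₀}
    (hy : SeqSum (fun n => Lop n (x n)) y) (n : ℕ) : y n = x n := by
  have hy_n := hy.map (adjoint (Lop (H₀ := H₀) n)) (map_continuous _)
  simp only [adjoint_Lop_apply, Lop_apply, lp.single_apply] at hy_n
  have h_single : HasSum (fun k => Pi.single k (x k) n) (x n) := by
    simpa using hasSum_single (f := fun k => Pi.single k (x k) n) n
      fun k hk => Pi.single_eq_of_ne hk.symm _
  exact hy_n.unique h_single.seqSum

section Analysis

variable {B : ℕ → H →L[ℂ] H₀} {θ : H →L[ℂ] l2 ℕ H₀}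

lemma adjoint_apply_Lop (hθ : ∀ h, SeqSum (fun n => Lop n (B n h)) (θ h)) (n : ℕ) (x : H₀) :
    adjoint θ (Lop n x) = adjoint (B n) x :=
  ext_inner_right ℂ fun h => by
    rw [adjoint_inner_left, adjoint_inner_left, Lop_apply, lp.inner_single_left,
      apply_eq_of_seqSum_Lop_s2 (hθ h)]

lemma seqSum_adjoint_apply (hθ : ∀ h, SeqSum (fun n => Lop n (B n h)) (θ h)) (z : l2 ℕ H₀) :
    SeqSum (fun n => adjoint (B n) (adjoint (Lop n) z)) (adjoint θ z) := by
  have hz := (lp.hasSum_single (by norm_num) z).seqSum.map (adjoint θ) (adjoint θ).continuous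
  simpa only [adjoint_Lop_apply, ← Lop_apply, adjoint_apply_Lop hθ] using hz

end Analysis

lemma eq_adjoint_comp_of_seqSum {A Ψ : ℕ → H →L[ℂ] H₀} {S : H →L[ℂ] H}
    {θA θΨ : H →L[ℂ] l2 ℕ H₀} (hS : ∀ h, SeqSum (fun n => adjoint (Ψ n) (A n h)) (S h))
    (hθA : ∀ h, SeqSum (fun n => Lop n (A n h)) (θA h))
    (hθΨ : ∀ h, SeqSum (fun n => Lop n (Ψ n h)) (θΨ h)) :
    S = adjoint θΨ ∘L θA := by
  ext h
  refine (hS h).unique ?_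
  simpa only [comp_apply, adjoint_Lop_apply, apply_eq_of_seqSum_Lop_s2 (hθA h)] using
    seqSum_adjoint_apply hθΨ (θA h)

namespace ContinuousLinearMap

variable {R E F : Type*} [Semiring R] [TopologicalSpace E] [AddCommMonoid E] [Module R E]
  [TopologicalSpace F] [AddCommMonoid F] [Module R F] {U : E →L[R] F} {V : F →L[R] E}
  {T : E →L[R] E}

lemma injective_of_comp_eq_one (h : T ∘L V ∘L U = 1) : Function.Injective U :=
  fun _ _ hxy => (leftInverse_of_comp h).injective (congrArg V hxy)

lemma surjective_of_comp_eq_one (h : (V ∘L U) ∘L T = 1) : Function.Surjective V :=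
  fun x => ⟨U (T x), rightInverse_of_comp h x⟩

lemma comp_idempotent_of_comp_eq_one (h : T ∘L V ∘L U = 1) :
    (U ∘L T ∘L V) ∘L (U ∘L T ∘L V) = U ∘L T ∘L V := by
  ext z
  exact congrArg U (leftInverse_of_comp h (T (V z)))

lemma range_comp_of_comp_eq_one (h : T ∘L V ∘L U = 1) :
    Set.range (U ∘L T ∘L V) = Set.range U := by
  refine (Set.range_comp_subset_range (T ∘L V) U).antisymm ?_
  rintro _ ⟨x, rfl⟩
  exact ⟨U x, congrArg U (leftInverse_of_comp h x)⟩

end ContinuousLinearMap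

/-- For a factorable weak OVF: the analysis operator `θ_A` is injective, the
synthesis operator `θ_Ψ* : z ↦ Σ Ψₙ* Lₙ* z` is bounded surjective, `S_{A,Ψ} = θ_Ψ* θ_A`, and
`P_{A,Ψ} = θ_A S⁻¹ θ_Ψ*` is an idempotent with range `θ_A(H)`. -/
theorem stmt2
    (A Ψ : ℕ → H →L[ℂ] H₀) (S T : H →L[ℂ] H)
    (hS : ∀ h : H, SeqSum (fun n => adjoint (Ψ n) (A n h)) (S h))
    (hST : S ∘L T = 1) (hTS : T ∘L S = 1)
    (θA θΨ : H →L[ℂ] l2 ℕ H₀)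
    (hθA : ∀ h : H, SeqSum (fun n => Lop n (A n h)) (θA h))
    (hθΨ : ∀ h : H, SeqSum (fun n => Lop n (Ψ n h)) (θΨ h)) :
    -- (i)
    Function.Injective θA ∧
    -- (ii)
    ((∀ z : l2 ℕ H₀, SeqSum (fun n => adjoint (Ψ n) (adjoint (Lop n) z)) (adjoint θΨ z)) ∧
      Function.Surjective (adjoint θΨ)) ∧
    -- (iii)
    S = adjoint θΨ ∘L θA ∧
    -- (iv)
    ((θA ∘L T ∘L adjoint θΨ) ∘L (θA ∘L T ∘L adjoint θΨ) = θA ∘L T ∘L adjoint θΨ ∧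
      Set.range (θA ∘L T ∘L adjoint θΨ) = Set.range θA) := by
  obtain rfl : S = adjoint θΨ ∘L θA := eq_adjoint_comp_of_seqSum hS hθA hθΨ
  exact ⟨injective_of_comp_eq_one hTS,
    ⟨seqSum_adjoint_apply hθΨ, surjective_of_comp_eq_one hST⟩, rfl,
    comp_idempotent_of_comp_eq_one hTS, range_comp_of_comp_eq_one hTS⟩
end
end

section
/- Let ((Aₙ),(Ψₙ)) be a Parseval factorable weak operator-valued frame in B(H,H₀) such that θ_A(H) = θ_Ψ(H) and P_{A,Ψ} := θ_A S_{A,Ψ}⁻¹ θ_Ψ* is an orthogonal projection. Let K := θ_A(H)^⊥ ⊆ ℓ²(ℕ,H₀) and H₁ := H ⊕ K. Then there exist bounded linear operators Bₙ, Φₙ : H₁ → H₀ (n ∈ ℕ) such that ((Bₙ),(Φₙ)) is an orthonormal OVF in B(H₁,H₀) and Bₙ(h ⊕ 0) = Aₙ h, Φₙ(h ⊕ 0) = Ψₙ h for all h ∈ H and all n ∈ ℕ. (In particular, h ↦ h ⊕ 0 is an isometric embedding of H into H₁.) -/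
noncomputable section

open ContinuousLinearMap Filter

variable {H H₀ : Type*} [NormedAddCommGroup H] [InnerProductSpace ℂ H] [CompleteSpace H]
  [NormedAddCommGroup H₀] [InnerProductSpace ℂ H₀] [CompleteSpace H₀]

/-! Parseval means `θ_Ψ* θ_A = 1`, so `P = θ_A θ_Ψ*` is idempotent; being self-adjoint, it is the
orthogonal projection onto `θ_A(H)`, and `θ_Ψ*` vanishes on `K = θ_A(H)ᗮ`. Put
`θ_B (h, k) = θ_A h + k` and `θ_Φ (h, k) = θ_Ψ h + k`. Expanding inner products gives
`θ_Φ* θ_B = 1`, and `θ_B` is onto because `y = θ_A (θ_Ψ* y) + (1 - P) y`; a left inverse of a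
surjection is a two-sided inverse. The operators `B_n`, `Φ_n` are the coordinates of `θ_B`, `θ_Φ`. -/

section Dilation

variable {𝕜 E F : Type*} [RCLike 𝕜] [NormedAddCommGroup E] [InnerProductSpace 𝕜 E]
  [NormedAddCommGroup F] [InnerProductSpace 𝕜 F]

def dilate (a : E →L[𝕜] F) (K : Submodule 𝕜 F) : WithLp 2 (E × K) →L[𝕜] F :=
  a ∘L WithLp.fstL 2 𝕜 E K + K.subtypeL ∘L WithLp.sndL 2 𝕜 E K

lemma dilate_apply (a : E →L[𝕜] F) (K : Submodule 𝕜 F) (x : WithLp 2 (E × K)) :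
    dilate a K x = a x.fst + x.snd :=
  rfl

lemma dilate_toLp_zero (a : E →L[𝕜] F) (K : Submodule 𝕜 F) (x : E) :
    dilate a K (WithLp.toLp 2 (x, 0)) = a x := by
  rw [dilate_apply, WithLp.toLp_fst, WithLp.toLp_snd, ZeroMemClass.coe_zero, add_zero]

variable [CompleteSpace E] [CompleteSpace F] {a ψ : E →L[𝕜] F} (hψa : adjoint ψ ∘L a = 1) (hP : IsSelfAdjoint (a ∘L adjoint ψ))
include hψa hP

lemma sub_apply_adjoint_mem_orthogonal_range (y : F) :
    y - a (adjoint ψ y) ∈ (LinearMap.range (a : E →ₗ[𝕜] F))ᗮ := by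
  rw [Submodule.mem_orthogonal]
  rintro _ ⟨x, rfl⟩
  have hfix : (a ∘L adjoint ψ) (a x) = a x := congrArg a (DFunLike.congr_fun hψa x)
  have : inner 𝕜 (a x) ((a ∘L adjoint ψ) y) = inner 𝕜 (a x) y := by
    rw [← adjoint_inner_left, hP.adjoint_eq, hfix]
  rw [ContinuousLinearMap.coe_coe, inner_sub_right, ← comp_apply, this, sub_self]

lemma adjoint_apply_eq_zero_of_mem_orthogonal_range {k : F}
    (hk : k ∈ (LinearMap.range (a : E →ₗ[𝕜] F))ᗮ) : adjoint ψ k = 0 := by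
  have hPk : (a ∘L adjoint ψ) k = 0 := by
    rw [← inner_self_eq_zero (𝕜 := 𝕜), ← adjoint_inner_right, hP.adjoint_eq]
    exact Submodule.inner_left_of_mem_orthogonal (LinearMap.mem_range_self (a : E →ₗ[𝕜] F) _) hk
  calc adjoint ψ k = adjoint ψ ((a ∘L adjoint ψ) k) := (DFunLike.congr_fun hψa _).symm
    _ = 0 := by rw [hPk, map_zero]

lemma adjoint_dilate_comp_dilate :
    adjoint (dilate ψ (LinearMap.range (a : E →ₗ[𝕜] F))ᗮ) ∘L
      dilate a (LinearMap.range (a : E →ₗ[𝕜] F))ᗮ = 1 := by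
  ext x
  refine ext_inner_left 𝕜 fun z => ?_
  have hψ : inner 𝕜 (ψ z.fst) (a x.fst) = inner 𝕜 z.fst x.fst := by
    rw [← adjoint_inner_right, ← comp_apply, hψa, one_apply_eq_self]
  have hψK : inner 𝕜 (ψ z.fst) (x.snd : F) = 0 := by
    rw [← adjoint_inner_right, adjoint_apply_eq_zero_of_mem_orthogonal_range hψa hP x.snd.2,
      inner_zero_right]
  have hKa : inner 𝕜 (z.snd : F) (a x.fst) = 0 :=
    Submodule.inner_left_of_mem_orthogonal (LinearMap.mem_range_self (a : E →ₗ[𝕜] F) _) z.snd.2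
  rw [one_apply_eq_self, comp_apply, adjoint_inner_right, dilate_apply, dilate_apply, inner_add_left,
    inner_add_right, inner_add_right, hψ, hψK, hKa, WithLp.prod_inner_apply]
  simp only [add_zero, zero_add, Submodule.coe_inner]
  rfl

lemma dilate_surjective :
    Function.Surjective (dilate a (LinearMap.range (a : E →ₗ[𝕜] F))ᗮ) := fun y =>
  ⟨WithLp.toLp 2 (adjoint ψ y, ⟨_, sub_apply_adjoint_mem_orthogonal_range hψa hP y⟩), by
    rw [dilate_apply]
    exact add_sub_cancel _ _⟩

lemma dilate_comp_adjoint_dilate :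
    dilate a (LinearMap.range (a : E →ₗ[𝕜] F))ᗮ ∘L
      adjoint (dilate ψ (LinearMap.range (a : E →ₗ[𝕜] F))ᗮ) = 1 := by
  have hleft : Function.LeftInverse (adjoint (dilate ψ (LinearMap.range (a : E →ₗ[𝕜] F))ᗮ))
      (dilate a (LinearMap.range (a : E →ₗ[𝕜] F))ᗮ) :=
    DFunLike.congr_fun (adjoint_dilate_comp_dilate hψa hP)
  ext y
  exact hleft.rightInverse_of_surjective (dilate_surjective hψa hP) y

end Dilation

lemma lp.evalCLM_apply {𝕜 α : Type*} {E : α → Type*} [∀ i, NormedAddCommGroup (E i)] [NormedRing 𝕜]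
    [∀ i, Module 𝕜 (E i)] [∀ i, IsBoundedSMul 𝕜 (E i)] {p : ENNReal} [Fact (1 ≤ p)] (i : α)
    (f : lp E p) : lp.evalCLM 𝕜 E p i f = f i :=
  rfl

section Coordinates

variable {E V : Type*} [NormedAddCommGroup V] [InnerProductSpace ℂ V]

lemma sum_lop_apply_of_lt (f : ℕ → V) {m n : ℕ} (hn : n < m) :
    (∑ k ∈ Finset.range m, Lop k (f k) : l2 ℕ V) n = f n := by
  change (↑(∑ k ∈ Finset.range m, lp.single (E := fun _ => V) 2 k (f k)) : ℕ → V) n = f n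
  rw [lp.coeFn_sum, Finset.sum_apply]
  simp [lp.single_apply, Pi.single_apply, Finset.mem_range.mpr hn]

lemma SeqSum.apply_eq {f : ℕ → V} {y : l2 ℕ V} (hy : SeqSum (fun n => Lop n (f n)) y) (n : ℕ) :
    y n = f n := by
  refine tendsto_nhds_unique (((lp.evalCLM ℂ _ 2 n).continuous.tendsto y).comp hy) ?_
  refine tendsto_const_nhds.congr' ?_
  filter_upwards [eventually_gt_atTop n] with m hm
  exact (sum_lop_apply_of_lt f hm).symm

lemma seqSum_lop_apply (y : l2 ℕ V) : SeqSum (fun n => Lop n (y n)) y :=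
  (lp.hasSum_single ENNReal.ofNat_ne_top y).tendsto_sum_nat

variable [NormedAddCommGroup E] [InnerProductSpace ℂ E] [CompleteSpace E] [CompleteSpace V]

lemma adjoint_comp_eq_one_of_seqSum {A Ψ : ℕ → E →L[ℂ] V} {θA θΨ : E →L[ℂ] l2 ℕ V}
    (hθA : ∀ h, SeqSum (fun n => Lop n (A n h)) (θA h))
    (hθΨ : ∀ h, SeqSum (fun n => Lop n (Ψ n h)) (θΨ h))
    (hParseval : ∀ h, SeqSum (fun n => adjoint (Ψ n) (A n h)) h) :
    adjoint θΨ ∘L θA = 1 := by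
  ext h
  refine ext_inner_left ℂ fun z => ?_
  rw [comp_apply, one_apply_eq_self, adjoint_inner_right]
  refine tendsto_nhds_unique (lp.hasSum_inner (θΨ z) (θA h)).tendsto_sum_nat
    ((tendsto_const_nhds.inner (hParseval h)).congr fun m => ?_)
  simp only [inner_sum, adjoint_inner_right, (hθΨ z).apply_eq, (hθA h).apply_eq]

end Coordinates

theorem stmt5_general
    (A Ψ : ℕ → H →L[ℂ] H₀)
    (θA θΨ : H →L[ℂ] l2 ℕ H₀)
    (hθA : ∀ h : H, SeqSum (fun n => Lop n (A n h)) (θA h))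
    (hθΨ : ∀ h : H, SeqSum (fun n => Lop n (Ψ n h)) (θΨ h))
    (hParseval : ∀ h : H, SeqSum (fun n => adjoint (Ψ n) (A n h)) h)
    (hproj : IsSelfAdjoint (θA ∘L adjoint θΨ)) :
    ∃ (B Φ : ℕ → WithLp 2 (H × ↥(LinearMap.range (θA : H →ₗ[ℂ] l2 ℕ H₀))ᗮ) →L[ℂ] H₀)
      (θB θΦ : WithLp 2 (H × ↥(LinearMap.range (θA : H →ₗ[ℂ] l2 ℕ H₀))ᗮ) →L[ℂ] l2 ℕ H₀),
      -- ((Bₙ),(Φₙ)) is factorable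
      (∀ x, SeqSum (fun n => Lop n (B n x)) (θB x)) ∧
      (∀ x, SeqSum (fun n => Lop n (Φ n x)) (θΦ x)) ∧
      -- and an orthonormal OVF: Parseval and Riesz
      adjoint θΦ ∘L θB = 1 ∧
      θB ∘L adjoint θΦ = 1 ∧
      -- the restrictions to `H` are the original operators
      (∀ (n : ℕ) (h : H),
        B n ((WithLp.equiv 2 (H × ↥(LinearMap.range (θA : H →ₗ[ℂ] l2 ℕ H₀))ᗮ)).symm (h, 0)) = A n h) ∧
      (∀ (n : ℕ) (h : H),
        Φ n ((WithLp.equiv 2 (H × ↥(LinearMap.range (θA : H →ₗ[ℂ] l2 ℕ H₀))ᗮ)).symm (h, 0)) = Ψ n h) ∧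
      -- `h ↦ h ⊕ 0` is an isometric embedding
      (∀ h : H,
        ‖(WithLp.equiv 2 (H × ↥(LinearMap.range (θA : H →ₗ[ℂ] l2 ℕ H₀))ᗮ)).symm (h, 0)‖ = ‖h‖) := by
  set K := (LinearMap.range (θA : H →ₗ[ℂ] l2 ℕ H₀))ᗮ
  have hΨA : adjoint θΨ ∘L θA = 1 := adjoint_comp_eq_one_of_seqSum hθA hθΨ hParseval
  refine ⟨fun n => lp.evalCLM ℂ _ 2 n ∘L dilate θA K, fun n => lp.evalCLM ℂ _ 2 n ∘L dilate θΨ K,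
    dilate θA K, dilate θΨ K, fun x => ?_, fun x => ?_,
    adjoint_dilate_comp_dilate hΨA hproj, dilate_comp_adjoint_dilate hΨA hproj,
    fun n h => ?_, fun n h => ?_, WithLp.norm_toLp_fst 2 H K⟩
  · simpa only [comp_apply, lp.evalCLM_apply] using seqSum_lop_apply (dilate θA K x)
  · simpa only [comp_apply, lp.evalCLM_apply] using seqSum_lop_apply (dilate θΨ K x)
  · rw [comp_apply, lp.evalCLM_apply, WithLp.equiv_symm_apply, dilate_toLp_zero, (hθA h).apply_eq]
  · rw [comp_apply, lp.evalCLM_apply, WithLp.equiv_symm_apply, dilate_toLp_zero, (hθΨ h).apply_eq]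

/-- Dilation of a Parseval factorable weak OVF with `θ_A(H) = θ_Ψ(H)` and
`P_{A,Ψ}` an orthogonal projection, to an orthonormal OVF on `H₁ = H ⊕ θ_A(H)^⊥`. -/
theorem stmt5
    (A Ψ : ℕ → H →L[ℂ] H₀)
    (θA θΨ : H →L[ℂ] l2 ℕ H₀)
    (hθA : ∀ h : H, SeqSum (fun n => Lop n (A n h)) (θA h))
    (hθΨ : ∀ h : H, SeqSum (fun n => Lop n (Ψ n h)) (θΨ h))
    (hParseval : ∀ h : H, SeqSum (fun n => adjoint (Ψ n) (A n h)) h)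
    (hrange : Set.range θA = Set.range θΨ)
    (hproj : IsSelfAdjoint (θA ∘L adjoint θΨ)) :
    ∃ (B Φ : ℕ → WithLp 2 (H × ↥(LinearMap.range (θA : H →ₗ[ℂ] l2 ℕ H₀))ᗮ) →L[ℂ] H₀)
      (θB θΦ : WithLp 2 (H × ↥(LinearMap.range (θA : H →ₗ[ℂ] l2 ℕ H₀))ᗮ) →L[ℂ] l2 ℕ H₀),
      -- ((Bₙ),(Φₙ)) is factorable
      (∀ x, SeqSum (fun n => Lop n (B n x)) (θB x)) ∧
      (∀ x, SeqSum (fun n => Lop n (Φ n x)) (θΦ x)) ∧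
      -- and an orthonormal OVF: Parseval and Riesz
      adjoint θΦ ∘L θB = 1 ∧
      θB ∘L adjoint θΦ = 1 ∧
      -- the restrictions to `H` are the original operators
      (∀ (n : ℕ) (h : H),
        B n ((WithLp.equiv 2 (H × ↥(LinearMap.range (θA : H →ₗ[ℂ] l2 ℕ H₀))ᗮ)).symm (h, 0)) = A n h) ∧
      (∀ (n : ℕ) (h : H),
        Φ n ((WithLp.equiv 2 (H × ↥(LinearMap.range (θA : H →ₗ[ℂ] l2 ℕ H₀))ᗮ)).symm (h, 0)) = Ψ n h) ∧
      -- `h ↦ h ⊕ 0` is an isometric embedding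
      (∀ h : H,
        ‖(WithLp.equiv 2 (H × ↥(LinearMap.range (θA : H →ₗ[ℂ] l2 ℕ H₀))ᗮ)).symm (h, 0)‖ = ‖h‖) :=
  stmt5_general A Ψ θA θΨ hθA hθΨ hParseval hproj
end
end

section
/- A pair of sequences ((Aₙ),(Ψₙ)) of bounded linear operators from H to H₀ is a factorable weak operator-valued frame in B(H,H₀) if and only if there exist bounded linear operators U, V : H → ℓ²(ℕ,H₀) such that Aₙ = Lₙ* U and Ψₙ = Lₙ* V for all n ∈ ℕ, and V*U is bounded invertible on H. -/
noncomputable section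

open ContinuousLinearMap Filter

variable {H H₀ : Type*} [NormedAddCommGroup H] [InnerProductSpace ℂ H] [CompleteSpace H]
  [NormedAddCommGroup H₀] [InnerProductSpace ℂ H₀] [CompleteSpace H₀]

lemma Lop_apply_s6 {I : Type*} [DecidableEq I] (i : I) (h : H₀) :
    Lop i h = lp.single 2 i h := rfl

lemma adjoint_Lop {I : Type*} [DecidableEq I] (i : I) (x : l2 I H₀) :
    adjoint (Lop i) x = x i := by
  apply ext_inner_right ℂ
  intro h
  rw [adjoint_inner_left, Lop_apply_s6, lp.inner_single_right]

set_option maxHeartbeats 1000000 in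
/-- `((Aₙ),(Ψₙ))` is a factorable weak OVF iff `Aₙ = Lₙ* U`, `Ψₙ = Lₙ* V` for
bounded operators `U, V : H → ℓ²(ℕ,H₀)` with `V*U` bounded invertible. -/
theorem stmt6 (A Ψ : ℕ → H →L[ℂ] H₀) :
    (∃ (θA θΨ : H →L[ℂ] l2 ℕ H₀) (S : H →L[ℂ] H),
        (∀ h : H, SeqSum (fun n => Lop n (A n h)) (θA h)) ∧
        (∀ h : H, SeqSum (fun n => Lop n (Ψ n h)) (θΨ h)) ∧
        (∀ h : H, SeqSum (fun n => adjoint (Ψ n) (A n h)) (S h)) ∧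
        IsUnit S) ↔
    (∃ U V : H →L[ℂ] l2 ℕ H₀,
        (∀ n : ℕ, A n = adjoint (Lop n) ∘L U) ∧
        (∀ n : ℕ, Ψ n = adjoint (Lop n) ∘L V) ∧
        IsUnit (adjoint V ∘L U)) := by
  constructor
  · rintro ⟨θA, θΨ, S, hA, hΨ, hS, hUnit⟩
    -- key: adjoint (Lop k) (θ h) = partial sums limit
    have key : ∀ (B : ℕ → H →L[ℂ] H₀) (θ : H →L[ℂ] l2 ℕ H₀),
        (∀ h : H, SeqSum (fun n => Lop n (B n h)) (θ h)) →
        ∀ k : ℕ, B k = adjoint (Lop k) ∘L θ := by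
      intro B θ hB k
      ext h
      have h0 := ((adjoint (Lop k)).continuous.tendsto (θ h)).comp (hB h)
      have h1 : Tendsto (fun m => adjoint (Lop k) (∑ n ∈ Finset.range m, Lop n (B n h)))
          atTop (nhds (adjoint (Lop k) (θ h))) := h0.congr (fun m => rfl)
      have h2 : ∀ m, m > k →
          adjoint (Lop k) (∑ n ∈ Finset.range m, Lop n (B n h)) = B k h := by
        intro m hm
        rw [map_sum]
        have : ∀ n ∈ Finset.range m, adjoint (Lop k) (Lop n (B n h)) =
            if n = k then B k h else 0 := by
          intro n _
          rw [adjoint_Lop, Lop_apply_s6]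
          by_cases hnk : n = k
          · subst hnk; simp [lp.single_apply_self]
          · rw [if_neg hnk]
            exact lp.single_apply_ne 2 n _ (Ne.symm hnk)
        rw [Finset.sum_congr rfl this, Finset.sum_ite_eq' _ k]
        simp [Finset.mem_range.mpr hm]
      have h3 : Tendsto (fun m => adjoint (Lop k) (∑ n ∈ Finset.range m, Lop n (B n h)))
          atTop (nhds (B k h)) := by
        apply Tendsto.congr' _ tendsto_const_nhds
        filter_upwards [eventually_gt_atTop k] with m hm
        exact (h2 m hm).symm
      have := tendsto_nhds_unique h3 h1
      simpa using this
    have hAf := key A θA hA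
    have hΨf := key Ψ θΨ hΨ
    refine ⟨θA, θΨ, hAf, hΨf, ?_⟩
    have hSeq : S = adjoint θΨ ∘L θA := by
      ext h
      have h0 := ((adjoint θΨ).continuous.tendsto (θA h)).comp (hA h)
      have h1 : Tendsto (fun m => adjoint θΨ (∑ n ∈ Finset.range m, Lop n (A n h)))
          atTop (nhds (adjoint θΨ (θA h))) := h0.congr (fun m => rfl)
      have h2 : ∀ m, adjoint θΨ (∑ n ∈ Finset.range m, Lop n (A n h)) =
          ∑ n ∈ Finset.range m, adjoint (Ψ n) (A n h) := by
        intro m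
        rw [map_sum]
        refine Finset.sum_congr rfl fun n _ => ?_
        rw [hΨf n, adjoint_comp, adjoint_adjoint]
        rfl
      have h3 : Tendsto (fun m => ∑ n ∈ Finset.range m, adjoint (Ψ n) (A n h))
          atTop (nhds (adjoint θΨ (θA h))) := by
        apply h1.congr
        intro m; exact h2 m
      exact tendsto_nhds_unique (hS h) h3
    rw [← hSeq]; exact hUnit
  · rintro ⟨U, V, hAU, hΨV, hUnit⟩
    have single : ∀ (θ : H →L[ℂ] l2 ℕ H₀) (B : ℕ → H →L[ℂ] H₀),
        (∀ n : ℕ, B n = adjoint (Lop n) ∘L θ) →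
        ∀ h : H, SeqSum (fun n => Lop n (B n h)) (θ h) := by
      intro θ B hB h
      have hs : HasSum (fun n : ℕ => lp.single 2 n ((θ h : ∀ _ : ℕ, H₀) n)) (θ h) :=
        lp.hasSum_single ENNReal.ofNat_ne_top (θ h)
      have := hs.tendsto_sum_nat
      apply this.congr
      intro m
      refine Finset.sum_congr rfl fun n _ => ?_
      show lp.single 2 n ((θ h : ∀ _ : ℕ, H₀) n) = Lop n (B n h)
      rw [hB n]
      simp only [comp_apply, Lop_apply_s6, adjoint_Lop]
    refine ⟨U, V, adjoint V ∘L U, single U A hAU, single V Ψ hΨV, ?_, hUnit⟩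
    intro h
    have h0 := ((adjoint V).continuous.tendsto (U h)).comp (single U A hAU h)
    have h1 : Tendsto (fun m => adjoint V (∑ n ∈ Finset.range m, Lop n (A n h)))
        atTop (nhds (adjoint V (U h))) := h0.congr (fun m => rfl)
    apply h1.congr
    intro m
    rw [map_sum]
    refine Finset.sum_congr rfl fun n _ => ?_
    show adjoint V (Lop n (A n h)) = adjoint (Ψ n) (A n h)
    rw [hΨV n, adjoint_comp, adjoint_adjoint]
    rfl
end
end

section
/- Let ((Aₙ),(Ψₙ)) and ((Bₙ),(Φₙ)) be Parseval weak operator-valued frames in B(H,H₀) which are orthogonal to each other. If C, D, E, F are bounded operators on H satisfying C*E + D*F = I_H, then the pair ((Aₙ C + Bₙ D), (Ψₙ E + Φₙ F)) is a Parseval weak OVF in B(H,H₀). In particular, if scalars c, d, e, f satisfy c̄ e + d̄ f = 1, then ((c Aₙ + d Bₙ), (e Ψₙ + f Φₙ)) is a Parseval weak OVF. -/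
/-!
Expanding the products splits the `n`-th term of the interpolated series into
`E* Ψₙ* Aₙ C h + F* Φₙ* Aₙ C h + E* Ψₙ* Bₙ D h + F* Φₙ* Bₙ D h`. By the Parseval and
orthogonality hypotheses these four series converge to `E* C h`, `0`, `0` and `F* D h`, whose
sum is `(C*E + D*F)* h = h`. The scalar case is the operator case with `C = c I`, etc.
-/

noncomputable section

open ContinuousLinearMap Filter

variable {H H₀ : Type*} [NormedAddCommGroup H] [InnerProductSpace ℂ H] [CompleteSpace H]
  [NormedAddCommGroup H₀] [InnerProductSpace ℂ H₀] [CompleteSpace H₀]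

namespace SeqSum

theorem map_s12 {R E₁ E₂ : Type*} [Semiring R] [AddCommMonoid E₁] [TopologicalSpace E₁]
    [Module R E₁] [AddCommMonoid E₂] [TopologicalSpace E₂] [Module R E₂]
    {f : ℕ → E₁} {x : E₁} (hf : SeqSum f x) (T : E₁ →L[R] E₂) :
    SeqSum (fun n => T (f n)) (T x) := by
  simpa only [SeqSum, Function.comp_def, map_sum] using (T.continuous.tendsto x).comp hf

theorem add {E : Type*} [AddCommMonoid E] [TopologicalSpace E] [ContinuousAdd E]
    {f g : ℕ → E} {x y : E} (hf : SeqSum f x) (hg : SeqSum g y) :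
    SeqSum (fun n => f n + g n) (x + y) := by
  simpa only [SeqSum, Finset.sum_add_distrib] using Tendsto.add hf hg

end SeqSum

section Interpolation

variable {𝕜 X Y : Type*} [RCLike 𝕜] [NormedAddCommGroup X] [InnerProductSpace 𝕜 X]
  [CompleteSpace X] [NormedAddCommGroup Y] [InnerProductSpace 𝕜 Y] [CompleteSpace Y]

theorem adjoint_add_comp_apply_add_comp (A Ψ B Φ : X →L[𝕜] Y) (C D E F : X →L[𝕜] X) (h : X) :
    adjoint (Ψ ∘L E + Φ ∘L F) ((A ∘L C + B ∘L D) h) =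
      adjoint E (adjoint Ψ (A (C h))) + adjoint F (adjoint Φ (A (C h))) +
        (adjoint E (adjoint Ψ (B (D h))) + adjoint F (adjoint Φ (B (D h)))) := by
  simp only [map_add, adjoint_comp, add_apply, comp_apply]

theorem seqSum_adjoint_add_comp_apply_add_comp {A Ψ B Φ : ℕ → X →L[𝕜] Y}
    {SAΨ SAΦ SBΨ SBΦ : X → X}
    (hAΨ : ∀ h, SeqSum (fun n => adjoint (Ψ n) (A n h)) (SAΨ h))
    (hAΦ : ∀ h, SeqSum (fun n => adjoint (Φ n) (A n h)) (SAΦ h))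
    (hBΨ : ∀ h, SeqSum (fun n => adjoint (Ψ n) (B n h)) (SBΨ h))
    (hBΦ : ∀ h, SeqSum (fun n => adjoint (Φ n) (B n h)) (SBΦ h))
    (C D E F : X →L[𝕜] X) (h : X) :
    SeqSum (fun n => adjoint (Ψ n ∘L E + Φ n ∘L F) ((A n ∘L C + B n ∘L D) h))
      (adjoint E (SAΨ (C h)) + adjoint F (SAΦ (C h)) +
        (adjoint E (SBΨ (D h)) + adjoint F (SBΦ (D h)))) := by
  simp only [adjoint_add_comp_apply_add_comp]
  exact (((hAΨ _).map_s12 _).add ((hAΦ _).map_s12 _)).add (((hBΨ _).map_s12 _).add ((hBΦ _).map_s12 _))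

theorem seqSum_interpolate_of_parseval_of_orthogonal {A Ψ B Φ : ℕ → X →L[𝕜] Y}
    (hA : ∀ h, SeqSum (fun n => adjoint (Ψ n) (A n h)) h)
    (hB : ∀ h, SeqSum (fun n => adjoint (Φ n) (B n h)) h)
    (hΨB : ∀ h, SeqSum (fun n => adjoint (Ψ n) (B n h)) 0)
    (hΦA : ∀ h, SeqSum (fun n => adjoint (Φ n) (A n h)) 0)
    {C D E F : X →L[𝕜] X} (hCDEF : adjoint C ∘L E + adjoint D ∘L F = 1) (h : X) :
    SeqSum (fun n => adjoint (Ψ n ∘L E + Φ n ∘L F) ((A n ∘L C + B n ∘L D) h)) h := by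
  have hsum : adjoint E (C h) + adjoint F (D h) = h := by
    simpa only [map_add, adjoint_comp, adjoint_adjoint, adjoint_one, add_apply, comp_apply,
      one_apply_eq_self] using congr(adjoint $hCDEF h)
  convert seqSum_adjoint_add_comp_apply_add_comp hA hΦA hΨB hB C D E F h using 1
  simp only [map_zero, add_zero, zero_add, hsum]

theorem adjoint_smul_one_comp_smul_one (c e : 𝕜) :
    adjoint (c • 1 : X →L[𝕜] X) ∘L (e • 1 : X →L[𝕜] X) = (starRingEnd 𝕜 c * e) • 1 := by
  rw [map_smulₛₗ, adjoint_one, smul_comp, comp_smul, ← mul_def, one_mul, smul_smul]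

end Interpolation

/-- Interpolation of two orthogonal Parseval weak OVFs yields a Parseval weak
OVF, both for operator coefficients with `C*E + D*F = I` and for scalar coefficients with
`c̄e + d̄f = 1`. -/
theorem stmt12
    (A Ψ B Φ : ℕ → H →L[ℂ] H₀)
    (hA : ∀ h : H, SeqSum (fun n => adjoint (Ψ n) (A n h)) h)
    (hB : ∀ h : H, SeqSum (fun n => adjoint (Φ n) (B n h)) h)
    (hortho1 : ∀ h : H, SeqSum (fun n => adjoint (Ψ n) (B n h)) 0)
    (hortho2 : ∀ h : H, SeqSum (fun n => adjoint (Φ n) (A n h)) 0) :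
    (∀ C D E F : H →L[ℂ] H, adjoint C ∘L E + adjoint D ∘L F = 1 →
      ∀ h : H,
        SeqSum (fun n => adjoint (Ψ n ∘L E + Φ n ∘L F) ((A n ∘L C + B n ∘L D) h)) h) ∧
    (∀ c d e f : ℂ, starRingEnd ℂ c * e + starRingEnd ℂ d * f = 1 →
      ∀ h : H,
        SeqSum (fun n => adjoint (e • Ψ n + f • Φ n) ((c • A n + d • B n) h)) h) := by
  have operator := fun C D E F (hCDEF : adjoint C ∘L E + adjoint D ∘L F = 1) =>
    seqSum_interpolate_of_parseval_of_orthogonal hA hB hortho1 hortho2 hCDEF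
  refine ⟨operator, fun c d e f hcdef h => ?_⟩
  have hscalar : adjoint (c • 1 : H →L[ℂ] H) ∘L (e • 1 : H →L[ℂ] H) +
      adjoint (d • 1 : H →L[ℂ] H) ∘L (f • 1 : H →L[ℂ] H) = 1 := by
    rw [adjoint_smul_one_comp_smul_one, adjoint_smul_one_comp_smul_one, ← add_smul, hcdef,
      one_smul]
  simpa only [comp_smul, one_def, comp_id] using operator _ _ _ _ hscalar h
end
end

section
/- Let ((Aₙ),(Ψₙ)) and ((Bₙ),(Φₙ)) be factorable weak operator-valued frames in B(H,H₀). The following are equivalent: (i) there exist bounded invertible operators R_{A,B}, R_{Ψ,Φ} on H with Bₙ = Aₙ R_{A,B} and Φₙ = Ψₙ R_{Ψ,Φ} for all n ∈ ℕ; (ii) there exist bounded invertible operators R_{A,B}, R_{Ψ,Φ} on H with θ_B = θ_A R_{A,B} and θ_Φ = θ_Ψ R_{Ψ,Φ}; (iii) P_{B,Φ} = P_{A,Ψ}, where P_{A,Ψ} := θ_A S_{A,Ψ}⁻¹ θ_Ψ* and P_{B,Φ} := θ_B S_{B,Φ}⁻¹ θ_Φ*. If these hold, the operators in (i) and (ii)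 are unique and given by R_{A,B} = S_{A,Ψ}⁻¹ θ_Ψ* θ_B and R_{Ψ,Φ} = (S_{A,Ψ}⁻¹)* θ_A* θ_Φ. Moreover, if ((Aₙ),(Ψₙ)) is Parseval, then ((Bₙ),(Φₙ)) is Parseval if and only if R_{Ψ,Φ}* R_{A,B} = I_H, if and only if R_{A,B} R_{Ψ,Φ}* = I_H. -/
noncomputable section

open ContinuousLinearMap Filter

variable {H H₀ : Type*} [NormedAddCommGroup H] [InnerProductSpace ℂ H] [CompleteSpace H]
  [NormedAddCommGroup H₀] [InnerProductSpace ℂ H₀] [CompleteSpace H₀]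

/-!
The frame operator factors as `S_{A,Ψ} = θ_Ψ* θ_A`, and the `n`-th coordinate of `θ_A h` is
`A_n h`; the latter makes (i) and (ii) the same statement. With `L_A := S_{A,Ψ}⁻¹ θ_Ψ*`, a left
inverse of `θ_A`, we have `P_{A,Ψ} = θ_A L_A`. If `P_{A,Ψ} = P_{B,Φ}`, then
`θ_B = P_{B,Φ} θ_B = θ_A (L_A θ_B)`, and `L_A θ_B` is invertible with inverse `L_B θ_A`; the same
argument for the adjoint data `(θ_Ψ, S_{A,Ψ}⁻¹* θ_A*)` produces `R_{Ψ,Φ}`. Conversely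
`S_{B,Φ} = R_{Ψ,Φ}* S_{A,Ψ} R_{A,B}` forces `R_{A,B} S_{B,Φ}⁻¹ R_{Ψ,Φ}* = S_{A,Ψ}⁻¹`, hence
`P_{B,Φ} = P_{A,Ψ}`; in the Parseval case it reads `S_{B,Φ} = R_{Ψ,Φ}* R_{A,B}`.
-/

section AnalysisOperator

variable {E F : Type*} [NormedAddCommGroup E] [NormedSpace ℂ E]
  [NormedAddCommGroup F] [InnerProductSpace ℂ F] {A B : ℕ → E →L[ℂ] F} {θA θB : E →L[ℂ] l2 ℕ F}

theorem analysisOp_apply (hθA : ∀ h : E, SeqSum (fun n => Lop n (A n h)) (θA h))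
    (h : E) (n : ℕ) : θA h n = A n h := by
  have hev := ((lp.evalCLM ℂ (fun _ : ℕ => F) 2 n).continuous.tendsto _).comp (hθA h)
  refine tendsto_nhds_unique hev (tendsto_const_nhds.congr' ?_)
  filter_upwards [eventually_gt_atTop n] with m hm
  simp only [Function.comp_apply, map_sum]
  rw [Finset.sum_eq_single_of_mem n (Finset.mem_range.2 hm)]
  · exact (lp.single_apply_self (E := fun _ : ℕ => F) 2 n (A n h)).symm
  · exact fun k _ hk => lp.single_apply_ne (E := fun _ : ℕ => F) 2 k _ (Ne.symm hk)

theorem analysisOp_eq_comp_iff (hθA : ∀ h : E, SeqSum (fun n => Lop n (A n h)) (θA h))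
    (hθB : ∀ h : E, SeqSum (fun n => Lop n (B n h)) (θB h)) {R : E →L[ℂ] E} :
    θB = θA ∘L R ↔ ∀ n, B n = A n ∘L R := by
  constructor
  · rintro rfl n
    ext h
    rw [comp_apply, ← analysisOp_apply hθB, ← analysisOp_apply hθA, comp_apply]
  · intro hR
    ext h n
    rw [comp_apply, analysisOp_apply hθB, analysisOp_apply hθA, hR, comp_apply]

end AnalysisOperator

theorem adjoint_analysisOp_comp_analysisOp {E F : Type*}
    [NormedAddCommGroup E] [InnerProductSpace ℂ E] [CompleteSpace E]
    [NormedAddCommGroup F] [InnerProductSpace ℂ F] [CompleteSpace F]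
    {A Ψ : ℕ → E →L[ℂ] F} {θA θΨ : E →L[ℂ] l2 ℕ F} {S : E →L[ℂ] E}
    (hS : ∀ h : E, SeqSum (fun n => adjoint (Ψ n) (A n h)) (S h))
    (hθA : ∀ h : E, SeqSum (fun n => Lop n (A n h)) (θA h))
    (hθΨ : ∀ h : E, SeqSum (fun n => Lop n (Ψ n h)) (θΨ h)) :
    adjoint θΨ ∘L θA = S := by
  ext h
  refine ext_inner_left ℂ fun v => ?_
  rw [comp_apply]
  have hl2 := (lp.hasSum_inner (𝕜 := ℂ) (θΨ v) (θA h)).tendsto_sum_nat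
  simp only [analysisOp_apply hθΨ, analysisOp_apply hθA, ← adjoint_inner_right] at hl2
  refine tendsto_nhds_unique hl2 ?_
  simpa only [SeqSum, inner_sum] using Tendsto.inner (𝕜 := ℂ) tendsto_const_nhds (hS h)

theorem mul_eq_one_comm_of_isUnit {M : Type*} [Monoid M] {a u : M} (hu : IsUnit u) :
    a * u = 1 ↔ u * a = 1 := by
  obtain ⟨u, rfl⟩ := hu
  rw [Units.mul_eq_one_iff_eq_inv, Units.mul_eq_one_iff_inv_eq, eq_comm]

section LeftInverse

variable {𝕜 : Type*} [Semiring 𝕜] {E F : Type*} [TopologicalSpace E] [AddCommMonoid E]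
  [Module 𝕜 E] [TopologicalSpace F] [AddCommMonoid F] [Module 𝕜 F]
  {X X' : E →L[𝕜] F} {L L' : F →L[𝕜] E}

theorem eq_comp_of_comp_eq_one (hL : L ∘L X = 1) {R : E →L[𝕜] E} (h : X' = X ∘L R) :
    R = L ∘L X' := by
  rw [h, ← comp_assoc, hL, one_def, id_comp]

theorem eq_comp_comp_of_comp_eq (hL' : L' ∘L X' = 1) (hP : X ∘L L = X' ∘L L') :
    X' = X ∘L L ∘L X' := by
  rw [← comp_assoc, hP, comp_assoc, hL', one_def, comp_id]

theorem comp_comp_eq_one_of_comp_eq (hL : L ∘L X = 1) (hP : X ∘L L = X' ∘L L') :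
    (L ∘L X') ∘L (L' ∘L X) = 1 := by
  calc (L ∘L X') ∘L (L' ∘L X) = L ∘L (X' ∘L L') ∘L X := rfl
    _ = (L ∘L X) ∘L (L ∘L X) := by rw [← hP]; rfl
    _ = 1 := by rw [hL]; rfl

theorem isUnit_comp_of_comp_eq (hL : L ∘L X = 1) (hL' : L' ∘L X' = 1)
    (hP : X ∘L L = X' ∘L L') : IsUnit (L ∘L X') :=
  ⟨⟨L ∘L X', L' ∘L X, comp_comp_eq_one_of_comp_eq hL hP,
    comp_comp_eq_one_of_comp_eq hL' hP.symm⟩, rfl⟩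

end LeftInverse

section Adjoint

variable {E F : Type*} [NormedAddCommGroup E] [InnerProductSpace ℂ E] [CompleteSpace E]
  [NormedAddCommGroup F] [InnerProductSpace ℂ F] [CompleteSpace F]
  {X X' Y Y' : E →L[ℂ] F} {S T S' T' R R' : E →L[ℂ] E}

theorem adjoint_comp_adjoint_comp_eq_one (hS : adjoint Y ∘L X = S) (hST : S ∘L T = 1) :
    (adjoint T ∘L adjoint X) ∘L Y = 1 := by
  rw [comp_assoc, ← adjoint_adjoint Y, ← adjoint_comp, hS, ← adjoint_comp, hST,
    adjoint_one]

theorem adjoint_comp_eq_of_eq_comp (hX : X' = X ∘L R) (hY : Y' = Y ∘L R') :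
    adjoint Y' ∘L X' = adjoint R' ∘L (adjoint Y ∘L X) ∘L R := by
  rw [hX, hY, adjoint_comp]
  rfl

theorem comp_comp_adjoint_eq_of_eq_comp (hS : adjoint Y ∘L X = S) (hTS : T ∘L S = 1)
    (hS' : adjoint Y' ∘L X' = S') (hS'T' : S' ∘L T' = 1) (hX : X' = X ∘L R)
    (hY : Y' = Y ∘L R') (hR' : IsUnit R') :
    X' ∘L T' ∘L adjoint Y' = X ∘L T ∘L adjoint Y := by
  have hR'adj : IsUnit (adjoint R') := by simpa only [star_eq_adjoint] using hR'.star
  have hright : (S ∘L R ∘L T') ∘L adjoint R' = 1 := by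
    refine (mul_eq_one_comm_of_isUnit hR'adj).2 ?_
    rw [← hS'T', ← hS', adjoint_comp_eq_of_eq_comp hX hY, hS]
    rfl
  have hmiddle : R ∘L T' ∘L adjoint R' = T := by
    calc R ∘L T' ∘L adjoint R' = (T ∘L S) ∘L R ∘L T' ∘L adjoint R' := by
          rw [hTS, one_def, id_comp]
      _ = T ∘L (S ∘L R ∘L T') ∘L adjoint R' := rfl
      _ = T := by rw [hright, one_def, comp_id]
  calc X' ∘L T' ∘L adjoint Y' = X ∘L (R ∘L T' ∘L adjoint R') ∘L adjoint Y := by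
        rw [hX, hY, adjoint_comp]
        rfl
    _ = X ∘L T ∘L adjoint Y := by rw [hmiddle]

end Adjoint

/-- Characterization of similarity of factorable weak OVFs: (i) ↔ (ii) ↔ (iii),
uniqueness and formulas for the similarity operators, and the Parseval criterion. -/
theorem stmt14
    (A Ψ : ℕ → H →L[ℂ] H₀) (S T : H →L[ℂ] H)
    (hS : ∀ h : H, SeqSum (fun n => adjoint (Ψ n) (A n h)) (S h))
    (hST : S ∘L T = 1) (hTS : T ∘L S = 1)
    (θA θΨ : H →L[ℂ] l2 ℕ H₀)
    (hθA : ∀ h : H, SeqSum (fun n => Lop n (A n h)) (θA h))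
    (hθΨ : ∀ h : H, SeqSum (fun n => Lop n (Ψ n h)) (θΨ h))
    (B Φ : ℕ → H →L[ℂ] H₀) (SB TB : H →L[ℂ] H)
    (hSB : ∀ h : H, SeqSum (fun n => adjoint (Φ n) (B n h)) (SB h))
    (hSBTB : SB ∘L TB = 1) (hTBSB : TB ∘L SB = 1)
    (θB θΦ : H →L[ℂ] l2 ℕ H₀)
    (hθB : ∀ h : H, SeqSum (fun n => Lop n (B n h)) (θB h))
    (hθΦ : ∀ h : H, SeqSum (fun n => Lop n (Φ n h)) (θΦ h)) :
    -- (i) ↔ (ii)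
    ((∃ R R' : H →L[ℂ] H, IsUnit R ∧ IsUnit R' ∧
        (∀ n : ℕ, B n = A n ∘L R) ∧ (∀ n : ℕ, Φ n = Ψ n ∘L R')) ↔
      (∃ R R' : H →L[ℂ] H, IsUnit R ∧ IsUnit R' ∧
        θB = θA ∘L R ∧ θΦ = θΨ ∘L R')) ∧
    -- (ii) ↔ (iii)
    ((∃ R R' : H →L[ℂ] H, IsUnit R ∧ IsUnit R' ∧
        θB = θA ∘L R ∧ θΦ = θΨ ∘L R') ↔
      θB ∘L TB ∘L adjoint θΦ = θA ∘L T ∘L adjoint θΨ) ∧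
    -- uniqueness: the operators in (i) and (ii) are given by the stated formulas
    (∀ R R' : H →L[ℂ] H, IsUnit R → IsUnit R' →
      ((((∀ n : ℕ, B n = A n ∘L R) ∧ (∀ n : ℕ, Φ n = Ψ n ∘L R')) ∨
        (θB = θA ∘L R ∧ θΦ = θΨ ∘L R')) →
        R = T ∘L (adjoint θΨ ∘L θB) ∧ R' = adjoint T ∘L (adjoint θA ∘L θΦ))) ∧
    -- the Parseval criterion
    (S = 1 → ∀ R R' : H →L[ℂ] H, IsUnit R → IsUnit R' →
      (∀ n : ℕ, B n = A n ∘L R) → (∀ n : ℕ, Φ n = Ψ n ∘L R') →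
      ((SB = 1 ↔ adjoint R' ∘L R = 1) ∧ (SB = 1 ↔ R ∘L adjoint R' = 1))) := by
  have hSfac := adjoint_analysisOp_comp_analysisOp hS hθA hθΨ
  have hSBfac := adjoint_analysisOp_comp_analysisOp hSB hθB hθΦ
  have hLA : (T ∘L adjoint θΨ) ∘L θA = 1 := by rw [comp_assoc, hSfac, hTS]
  have hLB : (TB ∘L adjoint θΦ) ∘L θB = 1 := by rw [comp_assoc, hSBfac, hTBSB]
  have hLΨ := adjoint_comp_adjoint_comp_eq_one hSfac hST
  have hLΦ := adjoint_comp_adjoint_comp_eq_one hSBfac hSBTB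
  have i_iff_ii (R R' : H →L[ℂ] H) :
      ((∀ n, B n = A n ∘L R) ∧ ∀ n, Φ n = Ψ n ∘L R') ↔ θB = θA ∘L R ∧ θΦ = θΨ ∘L R' :=
    and_congr (analysisOp_eq_comp_iff hθA hθB).symm (analysisOp_eq_comp_iff hθΨ hθΦ).symm
  refine ⟨exists₂_congr fun R R' => and_congr_right' <| and_congr_right' <| i_iff_ii R R',
    ⟨?_, fun hP => ?_⟩, ?_, ?_⟩
  · rintro ⟨R, R', -, hR', hBR, hΦR'⟩
    exact comp_comp_adjoint_eq_of_eq_comp hSfac hTS hSBfac hSBTB hBR hΦR' hR'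
  · have hP' : θΨ ∘L adjoint T ∘L adjoint θA = θΦ ∘L adjoint TB ∘L adjoint θB := by
      simpa only [adjoint_comp, adjoint_adjoint, comp_assoc] using congrArg adjoint hP.symm
    exact ⟨_, _, isUnit_comp_of_comp_eq hLA hLB hP.symm, isUnit_comp_of_comp_eq hLΨ hLΦ hP',
      eq_comp_comp_of_comp_eq hLB hP.symm, eq_comp_comp_of_comp_eq hLΦ hP'⟩
  · rintro R R' - - h
    obtain ⟨hBR, hΦR'⟩ := h.elim (i_iff_ii R R').1 id
    exact ⟨eq_comp_of_comp_eq_one hLA hBR, eq_comp_of_comp_eq_one hLΨ hΦR'⟩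
  · rintro hS1 R R' hR - hB hΦ
    obtain ⟨hBR, hΦR'⟩ := (i_iff_ii R R').1 ⟨hB, hΦ⟩
    have hSBR : SB = adjoint R' ∘L R := by
      rw [← hSBfac, adjoint_comp_eq_of_eq_comp hBR hΦR', hSfac, hS1, one_def, id_comp]
    rw [hSBR]
    exact ⟨Iff.rfl, mul_eq_one_comm_of_isUnit hR⟩
end
end

section
/- Let ((Aₙ),(Ψₙ)) be a factorable weak operator-valued frame in B(H,H₀). If a factorable weak OVF ((Bₙ),(Φₙ)) in B(H,H₀) is both a dual of ((Aₙ),(Ψₙ)) and similar to ((Aₙ),(Ψₙ)), then ((Bₙ),(Φₙ)) is the canonical dual, i.e. Bₙ = Aₙ S_{A,Ψ}⁻¹ and Φₙ = Ψₙ (S_{A,Ψ}⁻¹)* for all n ∈ ℕ. -/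
noncomputable section

open ContinuousLinearMap Filter

variable {H H₀ : Type*} [NormedAddCommGroup H] [InnerProductSpace ℂ H] [CompleteSpace H]
  [NormedAddCommGroup H₀] [InnerProductSpace ℂ H₀] [CompleteSpace H₀]

/-- A factorable weak OVF which is both a dual of and similar to a given
factorable weak OVF `((Aₙ),(Ψₙ))` must be its canonical dual. -/
theorem stmt15
    (A Ψ : ℕ → H →L[ℂ] H₀) (S T : H →L[ℂ] H)
    (hS : ∀ h : H, SeqSum (fun n => adjoint (Ψ n) (A n h)) (S h))
    (hST : S ∘L T = 1) (hTS : T ∘L S = 1)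
    (θA θΨ : H →L[ℂ] l2 ℕ H₀)
    (hθA : ∀ h : H, SeqSum (fun n => Lop n (A n h)) (θA h))
    (hθΨ : ∀ h : H, SeqSum (fun n => Lop n (Ψ n h)) (θΨ h))
    -- `((Bₙ),(Φₙ))` is a factorable weak OVF
    (B Φ : ℕ → H →L[ℂ] H₀) (SB : H →L[ℂ] H)
    (hSB : ∀ h : H, SeqSum (fun n => adjoint (Φ n) (B n h)) (SB h))
    (hSBu : IsUnit SB)
    (θB θΦ : H →L[ℂ] l2 ℕ H₀)
    (hθB : ∀ h : H, SeqSum (fun n => Lop n (B n h)) (θB h))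
    (hθΦ : ∀ h : H, SeqSum (fun n => Lop n (Φ n h)) (θΦ h))
    -- which is a dual of `((Aₙ),(Ψₙ))`
    (hdual1 : ∀ h : H, SeqSum (fun n => adjoint (Ψ n) (B n h)) h)
    (hdual2 : ∀ h : H, SeqSum (fun n => adjoint (Φ n) (A n h)) h)
    -- and similar to `((Aₙ),(Ψₙ))`
    (hsim : ∃ R R' : H →L[ℂ] H, IsUnit R ∧ IsUnit R' ∧
      (∀ n : ℕ, B n = A n ∘L R) ∧ (∀ n : ℕ, Φ n = Ψ n ∘L R')) :
    ∀ n : ℕ, B n = A n ∘L T ∧ Φ n = Ψ n ∘L adjoint T := by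
  obtain ⟨R, R', _, _, hB, hΦ⟩ := hsim
  have hSR : ∀ h : H, S (R h) = h := by
    intro h
    have h1 := hS (R h)
    have h2 := hdual1 h
    simp only [hB, comp_apply] at h2
    exact tendsto_nhds_unique h1 h2
  have hRT : R = T := by
    ext h
    have e1 : (T ∘L S) (R h) = R h := by rw [hTS]; rfl
    calc R h = T (S (R h)) := e1.symm
    _ = T h := by rw [hSR h]
  have hR'S : ∀ h : H, adjoint R' (S h) = h := by
    intro h
    have h1 := hdual2 h
    simp only [hΦ, adjoint_comp, comp_apply] at h1
    have h2 : SeqSum (fun n => adjoint R' (adjoint (Ψ n) (A n h))) (adjoint R' (S h)) := by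
      have := ((adjoint R').continuous.tendsto (S h)).comp (hS h)
      simpa [SeqSum, Function.comp_def, map_sum] using this
    exact tendsto_nhds_unique h2 h1
  have hR'T : adjoint R' = T := by
    ext h
    have e1 : (S ∘L T) h = h := by rw [hST]; rfl
    calc adjoint R' h = adjoint R' (S (T h)) := by rw [show S (T h) = h from e1]
    _ = T h := hR'S (T h)
  have hR' : R' = adjoint T := by rw [← hR'T, adjoint_adjoint]
  intro n
  exact ⟨by rw [hB n, hRT], by rw [hΦ n, hR']⟩
end
end
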